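/- For every x ∈ ℍⁿ and every Heisenberg plane V ∈ 𝒱^k, the point P_V(x) is a 3-approximate nearest point: d(x, P_V(x)) ≤ 3·d(x, V), where d(x,V) = inf_{v∈V} d(x,v). -/

import Mathlib

/-!
Left translation by `p⁻¹` is an isometry, so we may take `p = 0`: the plane is `W × {0}` and `P_V`
is the Euclidean projection `m` of the horizontal part onto `W`. Write `x = (m + u, t)` with
`u ⊥ W` and a point of the plane as `(m + h, 0)` with `h ∈ W`. Since `W` is isotropic for
`ω = symA n`, moving from `m` to `m + h` only shifts the vertical part of the difference by
`2 ω(h, u)`, and `|ω(h, u)| = |⟪J h, u⟫| ≤ ‖h‖ ‖u‖`. Together with `‖x - (m + h)‖² = ‖u‖² + ‖h‖²`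
this gives `d(x, P_V x)⁴ ≤ 81 d(x, (m + h, 0))⁴`.
-/

open scoped BigOperators
noncomputable section

abbrev Heis (n : ℕ) := EuclideanSpace ℝ (Fin (2*n)) × ℝ

def symA (n : ℕ) (x y : EuclideanSpace ℝ (Fin (2*n))) : ℝ :=
  ∑ i : Fin n, (x ⟨i.val + n, by have := i.isLt; omega⟩ * y ⟨i.val, by have := i.isLt; omega⟩
    - x ⟨i.val, by have := i.isLt; omega⟩ * y ⟨i.val + n, by have := i.isLt; omega⟩)

def hMul (n : ℕ) (x y : Heis n) : Heis n :=
  (x.1 + y.1, x.2 + y.2 + 2 * symA n x.1 y.1)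

def hInv (n : ℕ) (x : Heis n) : Heis n := (-x.1, -x.2)

def Knorm (n : ℕ) (x : Heis n) : ℝ := (‖x.1‖^4 + x.2^2) ^ ((1:ℝ)/4)

def Kdist (n : ℕ) (x y : Heis n) : ℝ := Knorm n (hMul n (hInv n y) x)

def isotropic (n : ℕ) (W : Submodule ℝ (EuclideanSpace ℝ (Fin (2*n)))) : Prop :=
  ∀ x ∈ W, ∀ y ∈ W, symA n x y = 0

def plane (n : ℕ) (p : Heis n) (W : Submodule ℝ (EuclideanSpace ℝ (Fin (2*n)))) : Set (Heis n) :=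
  {z | ∃ w ∈ W, z = hMul n p (w, (0:ℝ))}

def projH (n : ℕ) (W : Submodule ℝ (EuclideanSpace ℝ (Fin (2*n)))) (x : Heis n) : Heis n :=
  ((W.orthogonalProjection x.1 : EuclideanSpace ℝ (Fin (2*n))), 0)

def PV (n : ℕ) (p : Heis n) (W : Submodule ℝ (EuclideanSpace ℝ (Fin (2*n)))) (x : Heis n) : Heis n :=
  hMul n p (projH n W (hMul n (hInv n p) x))

section Heisenberg

variable {n : ℕ}

local notation "E" => EuclideanSpace ℝ (Fin (2*n))

lemma symA_add_left (x y z : E) : symA n (x + y) z = symA n x z + symA n y z := by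
  unfold symA
  rw [← Finset.sum_add_distrib]
  exact Finset.sum_congr rfl fun i _ => by simp only [PiLp.add_apply]; ring

lemma symA_add_right (x y z : E) : symA n x (y + z) = symA n x y + symA n x z := by
  unfold symA
  rw [← Finset.sum_add_distrib]
  exact Finset.sum_congr rfl fun i _ => by simp only [PiLp.add_apply]; ring

lemma symA_neg_left (x y : E) : symA n (-x) y = -symA n x y := by
  unfold symA
  rw [← Finset.sum_neg_distrib]
  exact Finset.sum_congr rfl fun i _ => by simp only [PiLp.neg_apply]; ring

lemma symA_neg_right (x y : E) : symA n x (-y) = -symA n x y := by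
  unfold symA
  rw [← Finset.sum_neg_distrib]
  exact Finset.sum_congr rfl fun i _ => by simp only [PiLp.neg_apply]; ring

lemma symA_comm (x y : E) : symA n x y = -symA n y x := by
  unfold symA
  rw [← Finset.sum_neg_distrib]
  exact Finset.sum_congr rfl fun i _ => by ring

lemma sum_fin_two_mul (f : Fin (2*n) → ℝ) :
    ∑ j, f j = ∑ i : Fin n, f ⟨i.val, by omega⟩ + ∑ i : Fin n, f ⟨i.val + n, by omega⟩ := by
  have e : n + n = 2 * n := by omega
  rw [← Fintype.sum_equiv (finCongr e) (fun j => f (finCongr e j)) f (fun _ => rfl),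
    Fin.sum_univ_add]
  exact congrArg₂ (· + ·)
    (Finset.sum_congr rfl fun i _ => congrArg f (Fin.ext (by simp)))
    (Finset.sum_congr rfl fun i _ => congrArg f (Fin.ext (by simp [Nat.add_comm])))

/-- `J (x, y) = (y, -x)` on `ℝ²ⁿ = ℝⁿ × ℝⁿ`. -/
def symplecticJ (x : E) : E := WithLp.toLp 2 fun j : Fin (2*n) =>
  if h : (j : ℕ) < n then x ⟨(j : ℕ) + n, by omega⟩ else -x ⟨(j : ℕ) - n, by omega⟩

lemma symplecticJ_apply_low (x : E) (i : Fin n) :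
    symplecticJ x ⟨i.val, by omega⟩ = x ⟨i.val + n, by omega⟩ := by
  simp [symplecticJ, i.isLt]

lemma symplecticJ_apply_high (x : E) (i : Fin n) :
    symplecticJ x ⟨i.val + n, by omega⟩ = -x ⟨i.val, by omega⟩ := by
  have : ¬ i.val + n < n := by omega
  simp only [symplecticJ, PiLp.toLp_apply, this, dif_neg, not_false_eq_true]
  exact congrArg (fun j => -x j) (Fin.ext (by simp))

lemma inner_symplecticJ (x y : E) : inner ℝ (symplecticJ x) y = symA n x y := by
  rw [PiLp.inner_apply]
  simp only [RCLike.inner_apply, conj_trivial]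
  rw [sum_fin_two_mul (fun j => y j * symplecticJ x j), symA, ← Finset.sum_add_distrib]
  refine Finset.sum_congr rfl fun i _ => ?_
  rw [symplecticJ_apply_low, symplecticJ_apply_high]
  ring

lemma norm_symplecticJ (x : E) : ‖symplecticJ x‖ = ‖x‖ := by
  rw [EuclideanSpace.norm_eq, EuclideanSpace.norm_eq,
    sum_fin_two_mul (fun j => ‖symplecticJ x j‖ ^ 2), sum_fin_two_mul (fun j => ‖x j‖ ^ 2),
    add_comm]
  congr 2
  · exact Finset.sum_congr rfl fun i _ => by rw [symplecticJ_apply_high, norm_neg]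
  · exact Finset.sum_congr rfl fun i _ => by rw [symplecticJ_apply_low]

lemma abs_symA_le (x y : E) : |symA n x y| ≤ ‖x‖ * ‖y‖ := by
  rw [← inner_symplecticJ, ← norm_symplecticJ x]
  exact abs_real_inner_le_norm _ _

lemma Kdist_eq (x y : Heis n) :
    Kdist n x y = (‖x.1 - y.1‖ ^ 4 + (x.2 - y.2 - 2 * symA n y.1 x.1) ^ 2) ^ ((1:ℝ)/4) := by
  simp only [Kdist, Knorm, hMul, hInv, symA_neg_left]
  rw [neg_add_eq_sub]
  ring_nf

lemma Kdist_hMul_right (p x z : Heis n) :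
    Kdist n x (hMul n p z) = Kdist n (hMul n (hInv n p) x) z := by
  rw [Kdist_eq, Kdist_eq]
  simp only [hMul, hInv]
  congr 3
  · rw [neg_add_eq_sub, sub_sub]
  · rw [symA_neg_left, symA_add_right, symA_add_left, symA_neg_right, symA_comm z.1 p.1]
    ring

end Heisenberg

lemma rpow_quarter_le_three_mul {a b c s : ℝ} (hc : |c| ≤ a * b) :
    (a ^ 4 + s ^ 2) ^ ((1:ℝ)/4) ≤ 3 * ((a ^ 2 + b ^ 2) ^ 2 + (s - 2 * c) ^ 2) ^ ((1:ℝ)/4) := by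
  have hc2 : c ^ 2 ≤ (a * b) ^ 2 := by
    rw [← sq_abs]
    exact pow_le_pow_left₀ (abs_nonneg c) hc 2
  have key : a ^ 4 + s ^ 2 ≤ 3 ^ 4 * ((a ^ 2 + b ^ 2) ^ 2 + (s - 2 * c) ^ 2) := by
    nlinarith [sq_nonneg (s - 4 * c), sq_nonneg (a ^ 2 - b ^ 2)]
  have hB : 0 ≤ (a ^ 2 + b ^ 2) ^ 2 + (s - 2 * c) ^ 2 := by positivity
  calc (a ^ 4 + s ^ 2) ^ ((1:ℝ)/4)
      ≤ (3 ^ 4 * ((a ^ 2 + b ^ 2) ^ 2 + (s - 2 * c) ^ 2)) ^ ((1:ℝ)/4) :=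
        Real.rpow_le_rpow (by positivity) key (by norm_num)
    _ = 3 * ((a ^ 2 + b ^ 2) ^ 2 + (s - 2 * c) ^ 2) ^ ((1:ℝ)/4) := by
        rw [Real.mul_rpow (by positivity) hB, ← Real.rpow_natCast, ← Real.rpow_mul (by norm_num)]
        norm_num

lemma Kdist_projH_le {n : ℕ} {W : Submodule ℝ (EuclideanSpace ℝ (Fin (2*n)))}
    (hW : isotropic n W) (q : Heis n) {w : EuclideanSpace ℝ (Fin (2*n))} (hw : w ∈ W) :
    Kdist n q (projH n W q) ≤ 3 * Kdist n q (w, 0) := by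
  set m : EuclideanSpace ℝ (Fin (2*n)) := W.starProjection q.1
  set u := q.1 - m
  set h := w - m
  have hm : m ∈ W := W.starProjection_apply_mem q.1
  have hh : h ∈ W := W.sub_mem hw hm
  have hu : u ∈ Wᗮ := Submodule.sub_starProjection_mem_orthogonal (K := W) q.1
  have pythagoras : ‖q.1 - w‖ ^ 2 = ‖u‖ ^ 2 + ‖h‖ ^ 2 := by
    rw [← sub_sub_sub_cancel_right q.1 w m, norm_sub_sq_real, real_inner_comm,
      hu h hh]
    ring
  have vertical : symA n w q.1 = symA n m q.1 + symA n h u := by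
    rw [← add_sub_cancel m w, ← sub_add_cancel q.1 m,
      symA_add_left, symA_add_right, symA_add_right, hW h hh m hm]
    ring
  have hP : Kdist n q (projH n W q) = (‖u‖ ^ 4 + (q.2 - 2 * symA n m q.1) ^ 2) ^ ((1:ℝ)/4) := by
    rw [Kdist_eq, projH, sub_zero]
    rfl
  have hQ : Kdist n q (w, 0) = ((‖u‖ ^ 2 + ‖h‖ ^ 2) ^ 2
      + (q.2 - 2 * symA n m q.1 - 2 * symA n h u) ^ 2) ^ ((1:ℝ)/4) := by
    rw [Kdist_eq, ← pythagoras, vertical]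
    ring_nf
  rw [hP, hQ]
  exact rpow_quarter_le_three_mul ((abs_symA_le h u).trans_eq (mul_comm _ _))

theorem stmt9_general (n : ℕ) (W : Submodule ℝ (EuclideanSpace ℝ (Fin (2*n))))
    (hW : isotropic n W) (p x : Heis n) :
    Kdist n x (PV n p W x) ≤ 3 * sInf ((fun v => Kdist n x v) '' plane n p W) := by
  have hne : ((fun v => Kdist n x v) '' plane n p W).Nonempty :=
    ⟨_, hMul n p (0, 0), ⟨0, W.zero_mem, rfl⟩, rfl⟩
  rw [← div_le_iff₀' (by norm_num : (0:ℝ) < 3)]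
  refine le_csInf hne ?_
  rintro _ ⟨_, ⟨w, hw, rfl⟩, rfl⟩
  dsimp only
  rw [div_le_iff₀' (by norm_num : (0:ℝ) < 3), PV, Kdist_hMul_right, Kdist_hMul_right]
  exact Kdist_projH_le hW _ hw

/-- `P_V(x)` is a 3-approximate nearest point of `x` on the Heisenberg plane `V`. -/
theorem stmt9 (n k : ℕ) (W : Submodule ℝ (EuclideanSpace ℝ (Fin (2*n))))
    (hW : isotropic n W) (hdim : Module.finrank ℝ W = k) (p x : Heis n) :
    Kdist n x (PV n p W x) ≤ 3 * sInf ((fun v => Kdist n x v) '' plane n p W) :=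
  stmt9_general n W hW p x
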